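/- If x ∈ P_κ X, A ⊆ P_κ X is 1-s-strongly stationary in P_{κ_x} x, n ≥ 2, and A_0, ..., A_{n-1} are each ≺-cofinal in P_{κ_x} x, then d_0(A_0) ∩ ... ∩ d_0(A_{n-1}) ∩ A is 1-s-strongly stationary in P_{κ_x} x. -/
import Mathlib


namespace TwoCard


open Cardinal Set

/-- The set `x ∩ κ`: the elements of `x` that are ordinals less than `κ`. -/
def interK (κ : Cardinal.{1}) (x : Set Ordinal.{0}) : Set Ordinal.{0} :=
  {o | o ∈ x ∧ Ordinal.lift.{1} o < κ.ord}

/-- `κ_x = |x ∩ κ|`. -/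
noncomputable def kap (κ : Cardinal.{1}) (x : Set Ordinal.{0}) : Cardinal.{1} :=
  #(interK κ x)

/-- `P_κ X`, the collection of subsets of `X` of cardinality less than `κ`. -/
def P (κ : Cardinal.{1}) (X : Set Ordinal.{0}) : Set (Set Ordinal.{0}) :=
  {x | x ⊆ X ∧ #x < κ}

/-- The strong subset relation: `x ≺ y` iff `x ⊆ y` and `|x| < |y ∩ κ|`. -/
def prec (κ : Cardinal.{1}) (x y : Set Ordinal.{0}) : Prop :=
  x ⊆ y ∧ #x < kap κ y

/-- `A` is `≺`-cofinal in `P_{κ_x} x`. -/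
def CofinalBelow (κ : Cardinal.{1}) (A : Set (Set Ordinal.{0})) (x : Set Ordinal.{0}) : Prop :=
  ∀ y, prec κ y x → ∃ z ∈ A, prec κ y z ∧ prec κ z x

/-- `A` is `≺`-cofinal in `P_κ X`. -/
def PrecCofinal (κ : Cardinal.{1}) (X : Set Ordinal.{0}) (A : Set (Set Ordinal.{0})) : Prop :=
  ∀ x ∈ P κ X, ∃ y ∈ A, prec κ x y

/-- `κ ⊆ X`, i.e. every ordinal below `κ` belongs to `X`. -/
def KappaSub (κ : Cardinal.{1}) (X : Set Ordinal.{0}) : Prop :=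
  ∀ o : Ordinal.{0}, Ordinal.lift.{1} o < κ.ord → o ∈ X

/-- `κ` is weakly inaccessible: an uncountable regular limit cardinal. -/
def WeaklyInaccessible (κ : Cardinal.{u}) : Prop :=
  ℵ₀ < κ ∧ κ.IsRegular ∧ Order.IsSuccLimit κ

def UnbddBelow (C : Set Ordinal.{u}) (lam : Ordinal.{u}) : Prop :=
  ∀ a < lam, ∃ b ∈ C, a < b ∧ b < lam

def ClosedBelow (C : Set Ordinal.{u}) (lam : Ordinal.{u}) : Prop :=
  ∀ a < lam, a ≠ 0 → (∀ b < a, ∃ c ∈ C, b < c ∧ c < a) → a ∈ C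

/-- `C` is club in the ordinal `lam`. -/
def ClubBelow (C : Set Ordinal.{u}) (lam : Ordinal.{u}) : Prop :=
  UnbddBelow C lam ∧ ClosedBelow C lam

/-- `S` is stationary in the ordinal `lam`. -/
def StatBelow (S : Set Ordinal.{u}) (lam : Ordinal.{u}) : Prop :=
  ∀ C, ClubBelow C lam → ∃ a ∈ S ∩ C, a < lam

/-- The class of ordinals that are regular cardinals. -/
def RegOrds : Set Ordinal.{u} :=
  {o | o.card.ord = o ∧ o.card.IsRegular}

/-- `c` is weakly Mahlo: regular, uncountable, with stationarily many regular cardinals below. -/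
def WeaklyMahlo (c : Cardinal.{u}) : Prop :=
  c.IsRegular ∧ ℵ₀ < c ∧ StatBelow RegOrds c.ord

/-- `c` is Mahlo: (strongly) inaccessible with stationarily many regular cardinals below. -/
def Mahlo (c : Cardinal.{u}) : Prop :=
  c.IsInaccessible ∧ StatBelow RegOrds c.ord


/-- `d₀(B)`: the set of `y` such that `B` is `≺`-cofinal in `P_{κ_y} y`. -/
def d0set (κ : Cardinal.{1}) (B : Set (Set Ordinal.{0})) : Set (Set Ordinal.{0}) :=
  {y | CofinalBelow κ B y}

/-- `A` is `1`-strongly stationary in `P_{κ_x} x`. -/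
def OneStat (κ : Cardinal.{1}) (A : Set (Set Ordinal.{0})) (x : Set Ordinal.{0}) : Prop :=
  Order.IsSuccLimit (kap κ x) ∧
    ∀ S : Set (Set Ordinal.{0}), CofinalBelow κ S x →
      ∃ y ∈ A, prec κ y x ∧ CofinalBelow κ S y

/-- `A` is `1`-s-strongly stationary in `P_{κ_x} x`. -/
def OneSStat (κ : Cardinal.{1}) (A : Set (Set Ordinal.{0})) (x : Set Ordinal.{0}) : Prop :=
  Order.IsSuccLimit (kap κ x) ∧
    ∀ S T : Set (Set Ordinal.{0}), CofinalBelow κ S x → CofinalBelow κ T x →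
      ∃ y ∈ A, prec κ y x ∧ CofinalBelow κ S y ∧ CofinalBelow κ T y

lemma kap_le_mk (κ : Cardinal.{1}) (z : Set Ordinal.{0}) : kap κ z ≤ #z :=
  Cardinal.mk_le_mk_of_subset (fun _ ho => ho.1)

lemma prec_trans {κ : Cardinal.{1}} {a b c : Set Ordinal.{0}}
    (h1 : prec κ a b) (h2 : prec κ b c) : prec κ a c :=
  ⟨h1.1.trans h2.1, lt_of_lt_of_le h1.2 ((kap_le_mk κ b).trans h2.2.le)⟩

lemma prec_union {κ : Cardinal.{1}} {u v x : Set Ordinal.{0}}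
    (hlim : Order.IsSuccLimit (kap κ x)) (hu : prec κ u x) (hv : prec κ v x) :
    prec κ (u ∪ v) x := by
  refine ⟨Set.union_subset hu.1 hv.1, ?_⟩
  exact (Cardinal.mk_union_le u v).trans_lt
    (Cardinal.add_lt_of_lt (Cardinal.aleph0_le_of_isSuccLimit hlim) hu.2 hv.2)

lemma prec_of_union_left {κ : Cardinal.{1}} {u v y : Set Ordinal.{0}}
    (h : prec κ (u ∪ v) y) : prec κ u y :=
  ⟨(Set.subset_union_left).trans h.1,
    (Cardinal.mk_le_mk_of_subset (Set.subset_union_left)).trans_lt h.2⟩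

lemma prec_of_union_right {κ : Cardinal.{1}} {u v y : Set Ordinal.{0}}
    (h : prec κ (u ∪ v) y) : prec κ v y :=
  ⟨(Set.subset_union_right).trans h.1,
    (Cardinal.mk_le_mk_of_subset (Set.subset_union_right)).trans_lt h.2⟩

lemma prec_empty {κ : Cardinal.{1}} {y : Set Ordinal.{0}} (h : 0 < kap κ y) :
    prec κ (∅ : Set Ordinal.{0}) y := by
  refine ⟨Set.empty_subset y, ?_⟩
  simpa using h

/-- Key closure lemma: if `A` is 1-s-strongly stationary (stated via `hstat`) with no
degenerate witnesses, then for any finite family of `≺`-cofinal sets there are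
sets arbitrarily high below `x` below which all of them are simultaneously cofinal. -/
lemma closure_aux (κ : Cardinal.{1}) (x : Set Ordinal.{0})
    (A : Set (Set Ordinal.{0}))
    (hlim : Order.IsSuccLimit (kap κ x))
    (hstat : ∀ S T : Set (Set Ordinal.{0}), CofinalBelow κ S x → CofinalBelow κ T x →
      ∃ y ∈ A, prec κ y x ∧ CofinalBelow κ S y ∧ CofinalBelow κ T y)
    (hpos : ∀ y ∈ A, prec κ y x → 0 < kap κ y)
    (W : Set (Set Ordinal.{0})) (hW : CofinalBelow κ W x) :
    ∀ m (C : Fin m → Set (Set Ordinal.{0})), (∀ j, CofinalBelow κ (C j) x) →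
      ∀ v, prec κ v x → ∃ y, prec κ v y ∧ prec κ y x ∧ ∀ j, CofinalBelow κ (C j) y := by
  intro m
  induction m with
  | zero =>
    intro C _ v hv
    obtain ⟨z, _, hvz, hzx⟩ := hW v hv
    exact ⟨z, hvz, hzx, fun j => j.elim0⟩
  | succ m ih =>
    intro C hC v hv
    set E : Set (Set Ordinal.{0}) :=
      {z | prec κ v z ∧ prec κ z x ∧ ∀ j : Fin m, CofinalBelow κ (C j.castSucc) z} with hE
    have hEcof : CofinalBelow κ E x := by
      intro u hu
      have huv : prec κ (u ∪ v) x := prec_union hlim hu hv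
      obtain ⟨y', hy'1, hy'2, hy'3⟩ := ih (fun j => C j.castSucc) (fun j => hC j.castSucc)
        (u ∪ v) huv
      exact ⟨y', ⟨prec_of_union_right hy'1, hy'2, hy'3⟩, prec_of_union_left hy'1, hy'2⟩
    set F : Set (Set Ordinal.{0}) :=
      {z | z ∈ C (Fin.last m) ∧ prec κ v z} with hF
    have hFcof : CofinalBelow κ F x := by
      intro u hu
      have huv : prec κ (u ∪ v) x := prec_union hlim hu hv
      obtain ⟨c, hc1, hc2, hc3⟩ := hC (Fin.last m) (u ∪ v) huv
      exact ⟨c, ⟨hc1, prec_of_union_right hc2⟩, prec_of_union_left hc2, hc3⟩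
    obtain ⟨y, hyA, hyx, hEy, hFy⟩ := hstat E F hEcof hFcof
    have hy0 : 0 < kap κ y := hpos y hyA hyx
    obtain ⟨z0, hz0E, _, hz0y⟩ := hEy ∅ (prec_empty hy0)
    have hvy : prec κ v y := prec_trans hz0E.1 hz0y
    refine ⟨y, hvy, hyx, ?_⟩
    intro j
    refine Fin.lastCases ?_ ?_ j
    · intro w hw
      obtain ⟨c, hcF, hwc, hcy⟩ := hFy w hw
      exact ⟨c, hcF.1, hwc, hcy⟩
    · intro j w hw
      obtain ⟨z, hzE, hwz, hzy⟩ := hEy w hw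
      obtain ⟨c, hcC, hwc, hcz⟩ := hzE.2.2 j w hwz
      exact ⟨c, hcC, hwc, prec_trans hcz hzy⟩

/-- If `A` is `1`-s-strongly stationary in `P_{κ_x} x`, `n ≥ 2`, and
`A₀, …, A_{n-1}` are each `≺`-cofinal in `P_{κ_x} x`, then
`d₀(A₀) ∩ ⋯ ∩ d₀(A_{n-1}) ∩ A` is `1`-s-strongly stationary in `P_{κ_x} x`. -/
theorem inter_d0_oneSStat (κ : Cardinal.{1}) (X : Set Ordinal.{0})
    (hreg : κ.IsRegular) (hunc : ℵ₀ < κ) (hX : KappaSub κ X)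
    (x : Set Ordinal.{0}) (hx : x ∈ P κ X)
    (A : Set (Set Ordinal.{0})) (hA : OneSStat κ A x)
    (n : ℕ) (hn : 2 ≤ n) (As : Fin n → Set (Set Ordinal.{0}))
    (hAs : ∀ i, CofinalBelow κ (As i) x) :
    OneSStat κ ((⋂ i, d0set κ (As i)) ∩ A) x := by
  by_cases hdeg : ∃ y ∈ A, prec κ y x ∧ kap κ y = 0
  · -- degenerate case: a witness with empty κ-part works vacuously
    obtain ⟨y0, hy0A, hy0x, hy0k⟩ := hdeg
    refine ⟨hA.1, ?_⟩
    intro S T _ _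
    have hvac : ∀ B : Set (Set Ordinal.{0}), CofinalBelow κ B y0 := by
      intro B w hw
      exact absurd hw.2 (by simp [hy0k])
    refine ⟨y0, ⟨?_, hy0A⟩, hy0x, hvac S, hvac T⟩
    exact Set.mem_iInter.2 fun i => hvac (As i)
  · push_neg at hdeg
    have hpos : ∀ y ∈ A, prec κ y x → 0 < kap κ y := by
      intro y hyA hyx
      exact pos_iff_ne_zero.2 (hdeg y hyA hyx)
    refine ⟨hA.1, ?_⟩
    intro S T hS hT
    -- family: the Aᵢ together with S
    set C : Fin (n + 1) → Set (Set Ordinal.{0}) := Fin.snoc As S with hCdef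
    have hC : ∀ j, CofinalBelow κ (C j) x := by
      intro j
      refine Fin.lastCases ?_ ?_ j
      · simpa [hCdef] using hS
      · intro i; simpa [hCdef] using hAs i
    set E : Set (Set Ordinal.{0}) :=
      {z | prec κ z x ∧ CofinalBelow κ S z ∧ ∀ i, CofinalBelow κ (As i) z} with hEdef
    have hEcof : CofinalBelow κ E x := by
      intro v hv
      obtain ⟨y', hvy', hy'x, hy'⟩ := closure_aux κ x A hA.1 hA.2 hpos S hS (n + 1) C hC v hv
      refine ⟨y', ⟨hy'x, ?_, ?_⟩, hvy', hy'x⟩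
      · simpa [hCdef] using hy' (Fin.last n)
      · intro i; simpa [hCdef] using hy' i.castSucc
    obtain ⟨y, hyA, hyx, hEy, hTy⟩ := hA.2 E T hEcof hT
    have htrans : ∀ B : Set (Set Ordinal.{0}),
        (∀ z ∈ E, CofinalBelow κ B z) → CofinalBelow κ B y := by
      intro B hB w hw
      obtain ⟨z, hzE, hwz, hzy⟩ := hEy w hw
      obtain ⟨c, hcB, hwc, hcz⟩ := hB z hzE w hwz
      exact ⟨c, hcB, hwc, prec_trans hcz hzy⟩
    refine ⟨y, ⟨?_, hyA⟩, hyx, htrans S (fun z hz => hz.2.1), hTy⟩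
    exact Set.mem_iInter.2 fun i => htrans (As i) (fun z hz => hz.2.2 i)

end TwoCard
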